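/- arXiv:2508.07411 — 2 statements merged into one kernel-verified Lean document; each statement's English description precedes it below -/
import Mathlib

section
/- Let n ≥ 2 be an integer, let r ≥ 1 be a real number, and let x₁ ≥ x₂ ≥ … ≥ xₙ ≥ 0 be real numbers. Set x̄ = (1/n)·Σ_{i=1}^n xᵢ and x_{1,j} = (1/j)·Σ_{i=1}^{j} xᵢ. Then for every 1 ≤ j ≤ n−1, x_{1,j} ≤ x̄ + ( (1/n)·Σ_{i=1}^n |xᵢ − x̄|^{2r} / ( j/n + (j/n)^{2r}·(1 − j/n)^{1−2r} ) )^{1/(2r)} ≤ x̄ + ( ( (1/n)·Σ_{i=1}^n xᵢ^{2r} − x̄^{2r} ) / ( j/n + (j/n)^{2r}·(1 − j/n)^{1−2r} ) )^{1/(2r)}. -/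
/-!
Put `d i = x i - x̄`, so that `∑ d i = 0`, and let `m` be the mean of `d` over the first `j`
indices. The other `n - j` entries of `d` then have mean `-(j / (n - j)) m`, and the power-mean
inequality on each of the two blocks gives, with `w = j / n` and `p = 2r`,
`(1/n) ∑ |d i|^p ≥ |m|^p (w + w^p (1 - w)^(1-p))`; this is the first bound.
The second is Jensen's inequality for the superquadratic function `y ↦ y^p` (`p ≥ 2`):
sum the pointwise bound `a^p + p a^(p-1) (y - a) + |y - a|^p ≤ y^p` at `a = x̄`.
-/

open Finset

namespace Real

open Set

theorem rpow_add_tangent_add_rpow_le_rpow_add {p a t : ℝ} (hp : 2 ≤ p) (ha : 0 ≤ a)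
    (ht : 0 ≤ t) : a ^ p + p * a ^ (p - 1) * t + t ^ p ≤ (a + t) ^ p := by
  set g : ℝ → ℝ := fun t ↦ (a + t) ^ p - p * a ^ (p - 1) * t - t ^ p
  have hp1 : 1 ≤ p := by linarith
  have hg' : ∀ t, HasDerivAt g (p * (a + t) ^ (p - 1) - p * a ^ (p - 1) - p * t ^ (p - 1)) t := by
    intro t
    have h₁ := ((hasDerivAt_id t).const_add a).rpow_const (p := p) (Or.inr hp1)
    have h₂ := (hasDerivAt_id t).const_mul (p * a ^ (p - 1))
    have h₃ := hasDerivAt_rpow_const (x := t) (Or.inr hp1)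
    exact ((h₁.sub h₂).sub h₃).congr_deriv (by simp)
  have hmono : MonotoneOn g (Ici 0) := by
    refine monotoneOn_of_hasDerivWithinAt_nonneg (convex_Ici 0)
      (fun t _ ↦ (hg' t).continuousAt.continuousWithinAt) (fun t _ ↦ (hg' t).hasDerivWithinAt) ?_
    intro s hs
    rw [interior_Ici, Set.mem_Ioi] at hs
    -- superadditivity of `s ↦ s ^ (p - 1)`
    have := add_rpow_le_rpow_add ha hs.le (by linarith : 1 ≤ p - 1)
    nlinarith
  have := hmono self_mem_Ici ht ht
  simp only [g, add_zero, mul_zero, sub_zero, zero_rpow (by linarith : p ≠ 0)] at this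
  linarith

theorem rpow_sub_tangent_add_rpow_le_rpow_sub {p a t : ℝ} (hp : 2 ≤ p) (ht : 0 ≤ t)
    (hta : t ≤ a) : a ^ p - p * a ^ (p - 1) * t + t ^ p ≤ (a - t) ^ p := by
  set g : ℝ → ℝ := fun t ↦ (a - t) ^ p + p * a ^ (p - 1) * t - t ^ p
  have hp1 : 1 ≤ p := by linarith
  have hg' : ∀ t,
      HasDerivAt g (-(p * (a - t) ^ (p - 1)) + p * a ^ (p - 1) - p * t ^ (p - 1)) t := by
    intro t
    have h₁ := ((hasDerivAt_id t).const_sub a).rpow_const (p := p) (Or.inr hp1)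
    have h₂ := (hasDerivAt_id t).const_mul (p * a ^ (p - 1))
    have h₃ := hasDerivAt_rpow_const (x := t) (Or.inr hp1)
    exact ((h₁.add h₂).sub h₃).congr_deriv (by simp)
  have hmono : MonotoneOn g (Icc 0 a) := by
    refine monotoneOn_of_hasDerivWithinAt_nonneg (convex_Icc 0 a)
      (fun t _ ↦ (hg' t).continuousAt.continuousWithinAt) (fun t _ ↦ (hg' t).hasDerivWithinAt) ?_
    intro s hs
    rw [interior_Icc, Set.mem_Ioo] at hs
    have := add_rpow_le_rpow_add (sub_nonneg.2 hs.2.le) hs.1.le (by linarith : 1 ≤ p - 1)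
    rw [sub_add_cancel] at this
    nlinarith
  have := hmono (left_mem_Icc.2 (ht.trans hta)) ⟨ht, hta⟩ ht
  simp only [g, sub_zero, mul_zero, add_zero, zero_rpow (by linarith : p ≠ 0)] at this
  linarith

/-- `y ↦ y ^ p` is superquadratic on `[0, ∞)` for `p ≥ 2`. -/
theorem rpow_tangent_add_abs_rpow_le {p a y : ℝ} (hp : 2 ≤ p) (ha : 0 ≤ a) (hy : 0 ≤ y) :
    a ^ p + p * a ^ (p - 1) * (y - a) + |y - a| ^ p ≤ y ^ p := by
  rcases le_total a y with hay | hya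
  · rw [abs_of_nonneg (sub_nonneg.2 hay)]
    simpa using rpow_add_tangent_add_rpow_le_rpow_add hp ha (sub_nonneg.2 hay)
  · have := rpow_sub_tangent_add_rpow_le_rpow_sub hp (sub_nonneg.2 hya) (sub_le_self a hy)
    rw [sub_sub_cancel] at this
    rw [abs_of_nonpos (sub_nonpos.2 hya), neg_sub]
    linarith

theorem rpow_mul_one_sub_rpow {a b : ℝ} (ha : 0 ≤ a) (hb : 0 < b) (p : ℝ) :
    a ^ p * b ^ (1 - p) = b * (a / b) ^ p := by
  rw [div_rpow ha hb.le, rpow_sub hb, rpow_one]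
  field_simp

theorem le_rpow_one_div_of_abs_rpow_mul_le {m S D p : ℝ} (hp : 0 < p) (hS : 0 ≤ S) (hD : 0 < D)
    (h : |m| ^ p * D ≤ S) : m ≤ (S / D) ^ (1 / p) := by
  rw [one_div]
  refine (le_abs_self m).trans ((le_rpow_inv_iff_of_pos (abs_nonneg m) (by positivity) hp).2 ?_)
  rwa [le_div_iff₀ hD]

end Real

open Real

variable {ι : Type*}

theorem sum_mul_abs_sub_rpow_le (s : Finset ι) (w x : ι → ℝ) (hw₀ : ∀ i ∈ s, 0 ≤ w i)
    (hw₁ : ∑ i ∈ s, w i = 1) (hx : ∀ i ∈ s, 0 ≤ x i) {p : ℝ} (hp : 2 ≤ p) :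
    ∑ i ∈ s, w i * |x i - ∑ j ∈ s, w j * x j| ^ p ≤
      ∑ i ∈ s, w i * x i ^ p - (∑ i ∈ s, w i * x i) ^ p := by
  set m := ∑ i ∈ s, w i * x i
  have hm : 0 ≤ m := sum_nonneg fun i hi ↦ mul_nonneg (hw₀ i hi) (hx i hi)
  have key := sum_le_sum fun i hi ↦
    mul_le_mul_of_nonneg_left (rpow_tangent_add_abs_rpow_le hp hm (hx i hi)) (hw₀ i hi)
  -- the tangent terms average to zero because `m` is the weighted mean
  have htangent : ∑ i ∈ s, w i * (p * m ^ (p - 1) * (x i - m)) = 0 := by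
    simp only [mul_left_comm (w _), ← mul_sum, mul_sub, sum_sub_distrib, ← sum_mul, hw₁]
    ring
  simp only [mul_add, sum_add_distrib, ← sum_mul, hw₁, htangent] at key
  linarith

theorem card_mul_abs_sum_div_card_rpow_le {s : Finset ι} (hs : s.Nonempty) (d : ι → ℝ) {p : ℝ}
    (hp : 1 ≤ p) : #s * |(∑ i ∈ s, d i) / #s| ^ p ≤ ∑ i ∈ s, |d i| ^ p := by
  have hcard : (0 : ℝ) < #s := by exact_mod_cast hs.card_pos
  have hw : ∑ _i ∈ s, (1 / #s : ℝ) = 1 := by simp [hcard.ne']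
  calc #s * |(∑ i ∈ s, d i) / #s| ^ p
      ≤ #s * (∑ i ∈ s, 1 / #s * |d i|) ^ p := by
        gcongr
        rw [← mul_sum, abs_div, Nat.abs_cast, one_div_mul_eq_div]
        gcongr
        exact abs_sum_le_sum_abs d s
    _ ≤ #s * ∑ i ∈ s, 1 / #s * |d i| ^ p := by
        gcongr
        exact rpow_arith_mean_le_arith_mean_rpow s _ _ (fun _ _ ↦ by positivity) hw
          (fun _ _ ↦ abs_nonneg _) hp
    _ = ∑ i ∈ s, |d i| ^ p := by
        rw [← mul_sum]
        field_simp

theorem abs_sum_div_card_rpow_mul_le [DecidableEq ι] {s t : Finset ι} (hst : s ⊆ t)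
    (hs : s.Nonempty) (hts : (t \ s).Nonempty) (d : ι → ℝ) (hd : ∑ i ∈ t, d i = 0) {p : ℝ}
    (hp : 1 ≤ p) :
    |(∑ i ∈ s, d i) / #s| ^ p * ((#s / #t : ℝ) + (#s / #t : ℝ) ^ p * (1 - #s / #t) ^ (1 - p)) ≤
      1 / #t * ∑ i ∈ t, |d i| ^ p := by
  set J : ℝ := ((#s : ℕ) : ℝ)
  set K : ℝ := ((#(t \ s) : ℕ) : ℝ)
  set N : ℝ := ((#t : ℕ) : ℝ)
  set A := ∑ i ∈ s, d i
  set M := |A / J| ^ p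
  have hJ : 0 < J := Nat.cast_pos.2 hs.card_pos
  have hK : 0 < K := Nat.cast_pos.2 hts.card_pos
  have hN : N = K + J := by
    simp only [N, K, J]
    exact_mod_cast (card_sdiff_add_card_eq_card hst).symm
  have hN₀ : 0 < N := by linarith
  have hrest : ∑ i ∈ t \ s, d i = -A := by linarith [sum_sdiff hst (f := d)]
  have habs : |(∑ i ∈ t \ s, d i) / K| = J / K * |A / J| := by
    rw [hrest, abs_div, abs_div, abs_neg, abs_of_pos hJ, abs_of_pos hK]
    field_simp
  have hblocks : J * M + K * ((J / K) ^ p * M) ≤ ∑ i ∈ t, |d i| ^ p := by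
    have h₁ := card_mul_abs_sum_div_card_rpow_le hs d hp
    have h₂ := card_mul_abs_sum_div_card_rpow_le hts d hp
    rw [habs, mul_rpow (by positivity) (abs_nonneg _)] at h₂
    rw [← sum_sdiff hst]
    linarith
  have hweight : (J / N) ^ p * (1 - J / N) ^ (1 - p) = K / N * (J / K) ^ p := by
    have hcompl : 1 - J / N = K / N := by field_simp; linarith
    rw [hcompl, rpow_mul_one_sub_rpow (div_pos hJ hN₀).le (div_pos hK hN₀),
      div_div_div_cancel_right₀ hN₀.ne']
  calc M * (J / N + (J / N) ^ p * (1 - J / N) ^ (1 - p))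
      = 1 / N * (J * M + K * ((J / K) ^ p * M)) := by rw [hweight]; ring
    _ ≤ 1 / N * ∑ i ∈ t, |d i| ^ p := by gcongr

theorem stmt_11_general (n : ℕ) (r : ℝ) (hr : 1 ≤ r) (x : ℕ → ℝ)
    (hpos : ∀ i ∈ Finset.Icc 1 n, 0 ≤ x i)
    (xbar : ℝ) (hxbar : xbar = (1 / n) * ∑ i ∈ Finset.Icc 1 n, x i) :
    ∀ j, 1 ≤ j → j ≤ n - 1 →
      (1 / (j : ℝ)) * ∑ i ∈ Finset.Icc 1 j, x i ≤
        xbar + (((1 / n) * ∑ i ∈ Finset.Icc 1 n, |x i - xbar| ^ (2*r)) /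
          ((j / n : ℝ) + ((j / n : ℝ)) ^ (2*r) * (1 - (j / n : ℝ)) ^ (1 - 2*r)))
            ^ (1/(2*r)) ∧
      xbar + (((1 / n) * ∑ i ∈ Finset.Icc 1 n, |x i - xbar| ^ (2*r)) /
          ((j / n : ℝ) + ((j / n : ℝ)) ^ (2*r) * (1 - (j / n : ℝ)) ^ (1 - 2*r)))
            ^ (1/(2*r)) ≤
        xbar + ((((1 / n) * ∑ i ∈ Finset.Icc 1 n, x i ^ (2*r)) - xbar ^ (2*r)) /
          ((j / n : ℝ) + ((j / n : ℝ)) ^ (2*r) * (1 - (j / n : ℝ)) ^ (1 - 2*r)))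
            ^ (1/(2*r)) := by
  intro j hj₁ hjn
  have hn : (0 : ℝ) < n := by exact_mod_cast (by omega : 0 < n)
  have hjn' : (j / n : ℝ) < 1 := (div_lt_one hn).2 (by exact_mod_cast (by omega : j < n))
  have hcard : ∀ k : ℕ, ((#(Icc 1 k) : ℕ) : ℝ) = k := fun k ↦ by simp
  have hsum : ∑ i ∈ Icc 1 n, (x i - xbar) = 0 := by
    rw [sum_sub_distrib, sum_const, nsmul_eq_mul, hcard, hxbar]
    field_simp
    ring
  have hdev := abs_sum_div_card_rpow_mul_le (Icc_subset_Icc_right (by omega))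
    (nonempty_Icc.2 hj₁) ⟨n, by simp; omega⟩ _ hsum (by linarith : 1 ≤ 2 * r)
  rw [hcard, hcard] at hdev
  have hgap := sum_mul_abs_sub_rpow_le (Icc 1 n) (fun _ ↦ 1 / n) x (fun _ _ ↦ by positivity)
    (by rw [sum_const, nsmul_eq_mul, hcard]; field_simp) hpos (by linarith : 2 ≤ 2 * r)
  simp only [← mul_sum, ← hxbar] at hgap
  have hD : 0 < (j / n : ℝ) + ((j / n : ℝ)) ^ (2*r) * (1 - (j / n : ℝ)) ^ (1 - 2*r) := by
    have := rpow_nonneg (sub_nonneg.2 hjn'.le) (1 - 2 * r)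
    positivity
  have hmean : 1 / (j : ℝ) * ∑ i ∈ Icc 1 j, x i = xbar + (∑ i ∈ Icc 1 j, (x i - xbar)) / j := by
    rw [sum_sub_distrib, sum_const, nsmul_eq_mul, hcard]
    field_simp
    ring
  refine ⟨?_, ?_⟩
  · rw [hmean]
    gcongr xbar + ?_
    exact le_rpow_one_div_of_abs_rpow_mul_le (by linarith) (by positivity) hD hdev
  · gcongr

/-- Corollary 1 a. (uniform weights): bound on the average of the `j` largest
entries via deviations and via the superquadratic Jensen gap of `x ↦ x^(2r)`. -/
theorem stmt_11 (n : ℕ) (hn : 2 ≤ n) (r : ℝ) (hr : 1 ≤ r) (x : ℕ → ℝ)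
    (hmono : ∀ i, 1 ≤ i → i ≤ n - 1 → x (i + 1) ≤ x i)
    (hpos : ∀ i ∈ Finset.Icc 1 n, 0 ≤ x i)
    (xbar : ℝ) (hxbar : xbar = (1 / n) * ∑ i ∈ Finset.Icc 1 n, x i) :
    ∀ j, 1 ≤ j → j ≤ n - 1 →
      (1 / (j : ℝ)) * ∑ i ∈ Finset.Icc 1 j, x i ≤
        xbar + (((1 / n) * ∑ i ∈ Finset.Icc 1 n, |x i - xbar| ^ (2*r)) /
          ((j / n : ℝ) + ((j / n : ℝ)) ^ (2*r) * (1 - (j / n : ℝ)) ^ (1 - 2*r)))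
            ^ (1/(2*r)) ∧
      xbar + (((1 / n) * ∑ i ∈ Finset.Icc 1 n, |x i - xbar| ^ (2*r)) /
          ((j / n : ℝ) + ((j / n : ℝ)) ^ (2*r) * (1 - (j / n : ℝ)) ^ (1 - 2*r)))
            ^ (1/(2*r)) ≤
        xbar + ((((1 / n) * ∑ i ∈ Finset.Icc 1 n, x i ^ (2*r)) - xbar ^ (2*r)) /
          ((j / n : ℝ) + ((j / n : ℝ)) ^ (2*r) * (1 - (j / n : ℝ)) ^ (1 - 2*r)))
            ^ (1/(2*r)) :=
  stmt_11_general n r hr x hpos xbar hxbar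
end

section
/- Let n ≥ 2 be an integer, fix 1 ≤ k ≤ n−1, let r ≥ 1 be a real number, let b ≤ ∞, and let 0 ≤ x₁ ≤ x₂ ≤ … ≤ xₙ < b. Let t₁,…,tₙ be real numbers (not necessarily nonnegative) with Σ_{i=1}^n tᵢ = 1, satisfying: 0 ≤ Σ_{i=1}^{j} tᵢ ≤ 1 for all 1 ≤ j ≤ n; Σ_{i=1}^{j} tᵢ ≤ Σ_{i=1}^{k} tᵢ for all j ≤ k; t_{k+1} > 0; 0 ≤ Σ_{i=k+1}^{l} tᵢ ≤ Σ_{i=k+1}^{n} tᵢ for all k+1 ≤ l ≤ n; and 0 < P_k < 1 where P_k := Σ_{i=1}^{k} tᵢ. Set x̄ = Σ_{i=1}^n tᵢxᵢ, yᵢ = xᵢ − x̄, and x_{1,k} = Σ_{i=1}^{k} tᵢxᵢ / P_k. Then |x_{1,k} − x̄| ≤ ( Σ_{i=1}^n tᵢ|yᵢ|^{2r} / ( P_k + P_k^{2r}·(1−P_k)^{1−2r} ) )^{1/(2r)} ≤ ( ( Σ_{i=1}^n tᵢxᵢ^{2r} − x̄^{2r} ) / ( P_k + P_k^{2r}·(1−P_k)^{1−2r}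 ) )^{1/(2r)}. -/
/-!
Split the sum at `k`. On each block the weights are again of Jensen–Steffensen type, so
Jensen–Steffensen's inequality for the convex function `w ↦ |w - x̄|^(2r)` bounds
`∑ tᵢ |yᵢ|^(2r)` from below by `P |x_{1,k} - x̄|^(2r) + (1 - P) |x_{k+1,n} - x̄|^(2r)`. Since
`x̄ = P x_{1,k} + (1 - P) x_{k+1,n}`, the two deviations are proportional, which produces the
factor `P + P^(2r) (1 - P)^(1 - 2r)`. The second inequality is the Jensen–Steffensen inequality
for the superquadratic function `x ↦ x^(2r)`.

Both Jensen–Steffensen inequalities follow from one fact: if `ψ ∘ x` decreases and then increases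
and its minimum is nonnegative, then `∑ tᵢ ψ(xᵢ) ≥ 0`, by Abel summation on either side of the
minimum.
-/

open Finset

theorem Finset.sum_Icc_consecutive {M : Type*} [AddCommMonoid M] (f : ℕ → M) {m n k : ℕ}
    (hmn : m ≤ n + 1) (hnk : n ≤ k) :
    ∑ i ∈ Icc m n, f i + ∑ i ∈ Icc (n + 1) k, f i = ∑ i ∈ Icc m k, f i := by
  simp only [← Ico_add_one_right_eq_Icc]
  exact sum_Ico_consecutive f hmn (by omega)

def JensenSteffensenWeights (t : ℕ → ℝ) (a b : ℕ) : Prop :=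
  ∀ j ∈ Icc a b, 0 ≤ ∑ i ∈ Icc a j, t i ∧ ∑ i ∈ Icc a j, t i ≤ ∑ i ∈ Icc a b, t i

section Abel

variable {t u : ℕ → ℝ} {a m b : ℕ}

theorem mul_le_sum_mul_of_antitoneOn (ham : a ≤ m)
    (hS : ∀ j ∈ Ico a m, 0 ≤ ∑ i ∈ Icc a j, t i) (hu : AntitoneOn u (Set.Icc a m)) :
    (∑ i ∈ Icc a m, t i) * u m ≤ ∑ i ∈ Icc a m, t i * u i := by
  induction m, ham using Nat.le_induction with
  | base => simp
  | succ m ham ih =>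
    have hm := ih (fun j hj => hS j (by simp at hj ⊢; omega))
      (hu.mono (Set.Icc_subset_Icc_right m.le_succ))
    have hSm : 0 ≤ ∑ i ∈ Icc a m, t i := hS m (by simp; omega)
    have hstep : u (m + 1) ≤ u m := hu ⟨ham, m.le_succ⟩ ⟨by omega, le_rfl⟩ m.le_succ
    rw [sum_Icc_succ_top (by omega), sum_Icc_succ_top (by omega)]
    nlinarith [mul_le_mul_of_nonneg_left hstep hSm]

theorem mul_le_sum_mul_of_monotoneOn (ham : a ≤ m) (hmb : m ≤ b)
    (hS : ∀ j ∈ Ico m b, ∑ i ∈ Icc a j, t i ≤ ∑ i ∈ Icc a b, t i)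
    (hu : MonotoneOn u (Set.Icc m b))
    (hm : (∑ i ∈ Icc a m, t i) * u m ≤ ∑ i ∈ Icc a m, t i * u i) :
    (∑ i ∈ Icc a b, t i) * u m ≤ ∑ i ∈ Icc a b, t i * u i := by
  suffices ∀ j, m ≤ j → j ≤ b → (∑ i ∈ Icc a b, t i) * u m ≤
      ∑ i ∈ Icc a j, t i * u i + (∑ i ∈ Icc a b, t i - ∑ i ∈ Icc a j, t i) * u j by
    simpa using this b hmb le_rfl
  intro j hmj
  induction j, hmj using Nat.le_induction with
  | base => intro; linarith
  | succ j hmj ih =>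
    intro hjb
    have hSj := hS j (by simp; omega)
    have hstep : u j ≤ u (j + 1) := hu ⟨hmj, by omega⟩ ⟨by omega, hjb⟩ j.le_succ
    rw [sum_Icc_succ_top (by omega), sum_Icc_succ_top (by omega)]
    nlinarith [ih (by omega), mul_le_mul_of_nonneg_left hstep (sub_nonneg.2 hSj)]

end Abel

theorem exists_antitoneOn_monotoneOn_comp {a b : ℕ} {x : ℕ → ℝ} {ψ : ℝ → ℝ} {s : Set ℝ} {Z : ℝ}
    (hab : a ≤ b) (hx : MonotoneOn x (Set.Icc a b)) (hxs : ∀ i ∈ Set.Icc a b, x i ∈ s)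
    (hl : AntitoneOn ψ (s ∩ Set.Iic Z)) (hr : MonotoneOn ψ (s ∩ Set.Ici Z)) :
    ∃ m ∈ Icc a b, AntitoneOn (ψ ∘ x) (Set.Icc a m) ∧ MonotoneOn (ψ ∘ x) (Set.Icc m b) := by
  obtain ⟨m, hm, hmin⟩ := exists_min_image (Icc a b) (ψ ∘ x) (nonempty_Icc.2 hab)
  rw [mem_Icc] at hm
  refine ⟨m, mem_Icc.2 hm, fun i hi j hj hij => ?_, fun i hi j hj hij => ?_⟩
  · have hi' : i ∈ Set.Icc a b := ⟨hi.1, hi.2.trans hm.2⟩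
    have hj' : j ∈ Set.Icc a b := ⟨hj.1, hj.2.trans hm.2⟩
    by_cases hjZ : x j ≤ Z
    · exact hl ⟨hxs i hi', (hx hi' hj' hij).trans hjZ⟩ ⟨hxs j hj', hjZ⟩ (hx hi' hj' hij)
    · have hjm := hx hj' hm hj.2
      calc ψ (x j) ≤ ψ (x m) :=
            hr ⟨hxs j hj', (not_le.1 hjZ).le⟩ ⟨hxs m hm, (not_le.1 hjZ).le.trans hjm⟩ hjm
        _ ≤ ψ (x i) := hmin i (mem_Icc.2 hi')
  · have hi' : i ∈ Set.Icc a b := ⟨hm.1.trans hi.1, hi.2⟩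
    have hj' : j ∈ Set.Icc a b := ⟨hm.1.trans hj.1, hj.2⟩
    by_cases hiZ : Z ≤ x i
    · exact hr ⟨hxs i hi', hiZ⟩ ⟨hxs j hj', hiZ.trans (hx hi' hj' hij)⟩ (hx hi' hj' hij)
    · have hmi := hx hm hi' hi.1
      calc ψ (x i) ≤ ψ (x m) :=
            hl ⟨hxs m hm, hmi.trans (not_le.1 hiZ).le⟩ ⟨hxs i hi', (not_le.1 hiZ).le⟩ hmi
        _ ≤ ψ (x j) := hmin j (mem_Icc.2 hj')

namespace JensenSteffensenWeights

variable {t x : ℕ → ℝ} {a b : ℕ}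

theorem sum_nonneg (ht : JensenSteffensenWeights t a b) : 0 ≤ ∑ i ∈ Icc a b, t i := by
  rcases le_or_gt a b with hab | hba
  · exact (ht b (right_mem_Icc.2 hab)).1
  · simp [Icc_eq_empty_of_lt hba]

theorem mul_le_sum_mul {u : ℕ → ℝ} {m : ℕ} (ht : JensenSteffensenWeights t a b)
    (hm : m ∈ Icc a b) (hanti : AntitoneOn u (Set.Icc a m)) (hmono : MonotoneOn u (Set.Icc m b)) :
    (∑ i ∈ Icc a b, t i) * u m ≤ ∑ i ∈ Icc a b, t i * u i := by
  obtain ⟨ham, hmb⟩ := mem_Icc.1 hm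
  refine mul_le_sum_mul_of_monotoneOn ham hmb (fun j hj => (ht j ?_).2) hmono
    (mul_le_sum_mul_of_antitoneOn ham (fun j hj => (ht j ?_).1) hanti)
  all_goals simp only [mem_Ico, mem_Icc] at hj ⊢; omega

theorem sum_mul_left_le_sum_mul (ht : JensenSteffensenWeights t a b)
    (hx : MonotoneOn x (Set.Icc a b)) :
    (∑ i ∈ Icc a b, t i) * x a ≤ ∑ i ∈ Icc a b, t i * x i := by
  rcases lt_or_ge b a with hba | hab
  · simp [Icc_eq_empty_of_lt hba]
  · exact ht.mul_le_sum_mul (left_mem_Icc.2 hab) (by simp) hx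

theorem sum_mul_nonneg {ψ : ℝ → ℝ} {s : Set ℝ} {Z : ℝ} (ht : JensenSteffensenWeights t a b)
    (hx : MonotoneOn x (Set.Icc a b)) (hxs : ∀ i ∈ Set.Icc a b, x i ∈ s) (hZ : Z ∈ s)
    (hψZ : 0 ≤ ψ Z) (hl : AntitoneOn ψ (s ∩ Set.Iic Z)) (hr : MonotoneOn ψ (s ∩ Set.Ici Z)) :
    0 ≤ ∑ i ∈ Icc a b, t i * ψ (x i) := by
  rcases lt_or_ge b a with hba | hab
  · simp [Icc_eq_empty_of_lt hba]
  obtain ⟨m, hm, hanti, hmono⟩ := exists_antitoneOn_monotoneOn_comp hab hx hxs hl hr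
  have hxm := hxs m (mem_Icc.1 hm)
  have hψm : 0 ≤ ψ (x m) := by
    refine hψZ.trans ?_
    rcases le_total (x m) Z with h | h
    · exact hl ⟨hxm, h⟩ ⟨hZ, Set.mem_Iic.2 le_rfl⟩ h
    · exact hr ⟨hZ, Set.mem_Ici.2 le_rfl⟩ ⟨hxm, h⟩ h
  exact (mul_nonneg ht.sum_nonneg hψm).trans (ht.mul_le_sum_mul hm hanti hmono)

end JensenSteffensenWeights

section Convex

variable {S : Set ℝ} {f : ℝ → ℝ} {z : ℝ}

theorem ConvexOn.add_deriv_mul_sub_le {w : ℝ} (hf : ConvexOn ℝ S f) (hz : z ∈ S) (hw : w ∈ S)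
    (hd : DifferentiableAt ℝ f z) : f z + deriv f z * (w - z) ≤ f w := by
  rcases lt_trichotomy w z with h | rfl | h
  · have := hf.slope_le_deriv hw hz h hd
    rw [slope_def_field, div_le_iff₀ (sub_pos.2 h)] at this
    linarith
  · simp
  · have := hf.deriv_le_slope hz hw h hd
    rw [slope_def_field, le_div_iff₀ (sub_pos.2 h)] at this
    linarith

theorem ConvexOn.antitoneOn_of_isMinOn (hf : ConvexOn ℝ S f) (hz : z ∈ S)
    (hmin : IsMinOn f S z) : AntitoneOn f (S ∩ Set.Iic z) := by
  rintro u ⟨hu, -⟩ v ⟨hv, hvz⟩ huv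
  rcases (Set.mem_Iic.1 hvz).lt_or_eq with hvz | rfl
  · exact hf.le_left_of_right_le'' hu hz huv hvz (hmin hv)
  · exact hmin hu

theorem ConvexOn.monotoneOn_of_isMinOn (hf : ConvexOn ℝ S f) (hz : z ∈ S)
    (hmin : IsMinOn f S z) : MonotoneOn f (S ∩ Set.Ici z) := by
  rintro u ⟨hu, hzu⟩ v ⟨hv, -⟩ huv
  rcases (Set.mem_Ici.1 hzu).lt_or_eq with hzu | rfl
  · exact hf.le_right_of_left_le'' hz hv hzu huv (hmin hu)
  · exact hmin hv

end Convex

theorem JensenSteffensenWeights.jensen {t x : ℕ → ℝ} {a b : ℕ} {f : ℝ → ℝ} {Z : ℝ}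
    (ht : JensenSteffensenWeights t a b) (hx : MonotoneOn x (Set.Icc a b))
    (hf : ConvexOn ℝ Set.univ f) (hd : DifferentiableAt ℝ f Z)
    (hZ : ∑ i ∈ Icc a b, t i * x i = (∑ i ∈ Icc a b, t i) * Z) :
    (∑ i ∈ Icc a b, t i) * f Z ≤ ∑ i ∈ Icc a b, t i * f (x i) := by
  set ψ : ℝ → ℝ := fun w => f w - f Z - deriv f Z * (w - Z)
  have hψ : ConvexOn ℝ Set.univ ψ := ⟨convex_univ, fun u _ v _ α β hα hβ hαβ => by
    have := hf.2 (Set.mem_univ u) (Set.mem_univ v) hα hβ hαβ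
    simp only [ψ, smul_eq_mul] at this ⊢
    linear_combination this + (f Z - deriv f Z * Z) * hαβ⟩
  have hmin : IsMinOn ψ Set.univ Z := isMinOn_iff.2 fun w _ => by
    have := hf.add_deriv_mul_sub_le (Set.mem_univ Z) (Set.mem_univ w) hd
    simp only [ψ]
    linarith
  have key := ht.sum_mul_nonneg hx (fun _ _ => Set.mem_univ _) (Set.mem_univ Z) (by simp [ψ])
    (hψ.antitoneOn_of_isMinOn (Set.mem_univ Z) hmin)
    (hψ.monotoneOn_of_isMinOn (Set.mem_univ Z) hmin)
  have expand : ∑ i ∈ Icc a b, t i * ψ (x i) = ∑ i ∈ Icc a b, t i * f (x i)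
      - (∑ i ∈ Icc a b, t i) * f Z
      - deriv f Z * (∑ i ∈ Icc a b, t i * x i - (∑ i ∈ Icc a b, t i) * Z) := by
    simp only [ψ, mul_sub, sum_mul, mul_sum, ← sum_sub_distrib]
    exact sum_congr rfl fun i _ => by ring
  rw [expand, hZ] at key
  linarith

section Superquadratic

variable {f f' : ℝ → ℝ} {Z : ℝ}

def superquadraticDefect (f f' : ℝ → ℝ) (Z u : ℝ) : ℝ :=
  f u - f Z - f' Z * (u - Z) - f |u - Z|

theorem monotoneOn_superquadraticDefect (hf : ∀ u, 0 ≤ u → HasDerivAt f (f' u) u)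
    (hf' : ∀ u v, 0 ≤ u → 0 ≤ v → f' u + f' v ≤ f' (u + v)) (hZ : 0 ≤ Z) :
    MonotoneOn (superquadraticDefect f f' Z) (Set.Ici Z) := by
  have hd : ∀ u, Z ≤ u → HasDerivAt (fun u => f u - f Z - f' Z * (u - Z) - f (u - Z))
      (f' u - f' Z - f' (u - Z)) u := fun u hu => by
    have hsub := (hf (u - Z) (sub_nonneg.2 hu)).comp u ((hasDerivAt_id' u).sub_const Z)
    exact ((((hf u (hZ.trans hu)).sub_const (f Z)).sub
      (((hasDerivAt_id' u).sub_const Z).const_mul (f' Z))).sub hsub).congr_deriv (by ring)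
  refine (monotoneOn_of_hasDerivWithinAt_nonneg (convex_Ici Z)
    (fun u hu => (hd u hu).continuousAt.continuousWithinAt)
    (fun u hu => (hd u (interior_subset hu)).hasDerivWithinAt) fun u hu => ?_).congr
    fun u hu => by simp [superquadraticDefect, abs_of_nonneg (sub_nonneg.2 (Set.mem_Ici.1 hu))]
  have hu : Z ≤ u := interior_subset hu
  have := hf' Z (u - Z) hZ (sub_nonneg.2 hu)
  rw [add_sub_cancel] at this
  linarith

theorem antitoneOn_superquadraticDefect (hf : ∀ u, 0 ≤ u → HasDerivAt f (f' u) u)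
    (hf' : ∀ u v, 0 ≤ u → 0 ≤ v → f' u + f' v ≤ f' (u + v)) :
    AntitoneOn (superquadraticDefect f f' Z) (Set.Icc 0 Z) := by
  have hd : ∀ u ∈ Set.Icc 0 Z, HasDerivAt (fun u => f u - f Z - f' Z * (u - Z) - f (Z - u))
      (f' u - f' Z + f' (Z - u)) u := fun u hu => by
    have hsub := (hf (Z - u) (sub_nonneg.2 hu.2)).comp u ((hasDerivAt_id' u).const_sub Z)
    exact ((((hf u hu.1).sub_const (f Z)).sub
      (((hasDerivAt_id' u).sub_const Z).const_mul (f' Z))).sub hsub).congr_deriv (by ring)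
  refine (antitoneOn_of_hasDerivWithinAt_nonpos (convex_Icc 0 Z)
    (fun u hu => (hd u hu).continuousAt.continuousWithinAt)
    (fun u hu => (hd u (interior_subset hu)).hasDerivWithinAt) fun u hu => ?_).congr
    fun u hu => by simp [superquadraticDefect, abs_of_nonpos (sub_nonpos.2 hu.2)]
  have hu : u ∈ Set.Icc 0 Z := interior_subset hu
  have := hf' u (Z - u) hu.1 (sub_nonneg.2 hu.2)
  rw [add_sub_cancel] at this
  linarith

end Superquadratic

theorem JensenSteffensenWeights.superquadratic {t x : ℕ → ℝ} {a b : ℕ} {f f' : ℝ → ℝ} {Z : ℝ}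
    (ht : JensenSteffensenWeights t a b) (hx : MonotoneOn x (Set.Icc a b)) (hxa : 0 ≤ x a)
    (hf : ∀ u, 0 ≤ u → HasDerivAt f (f' u) u)
    (hf' : ∀ u v, 0 ≤ u → 0 ≤ v → f' u + f' v ≤ f' (u + v)) (hf0 : f 0 ≤ 0)
    (hZ0 : 0 ≤ Z) (hZ : ∑ i ∈ Icc a b, t i * x i = (∑ i ∈ Icc a b, t i) * Z) :
    (∑ i ∈ Icc a b, t i) * f Z + ∑ i ∈ Icc a b, t i * f |x i - Z| ≤
      ∑ i ∈ Icc a b, t i * f (x i) := by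
  have key := ht.sum_mul_nonneg (ψ := superquadraticDefect f f' Z) hx
    (fun i hi => hxa.trans (hx (Set.left_mem_Icc.2 (hi.1.trans hi.2)) hi hi.1))
    (Set.mem_Ici.2 hZ0) (by simpa [superquadraticDefect] using hf0)
    ((antitoneOn_superquadraticDefect hf hf').mono Set.Ici_inter_Iic.subset)
    ((monotoneOn_superquadraticDefect hf hf' hZ0).mono Set.inter_subset_right)
  have expand : ∑ i ∈ Icc a b, t i * superquadraticDefect f f' Z (x i) =
      ∑ i ∈ Icc a b, t i * f (x i)
      - (∑ i ∈ Icc a b, t i) * f Z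
      - f' Z * (∑ i ∈ Icc a b, t i * x i - (∑ i ∈ Icc a b, t i) * Z)
      - ∑ i ∈ Icc a b, t i * f |x i - Z| := by
    simp only [superquadraticDefect, mul_sub, sum_mul, mul_sum, ← sum_sub_distrib]
    exact sum_congr rfl fun i _ => by ring
  rw [expand, hZ] at key
  linarith

theorem JensenSteffensenWeights.rpow_superquadratic {t x : ℕ → ℝ} {a b : ℕ} {p Z : ℝ}
    (hp : 2 ≤ p) (ht : JensenSteffensenWeights t a b) (hx : MonotoneOn x (Set.Icc a b))
    (hxa : 0 ≤ x a) (hZ0 : 0 ≤ Z) (hZ : ∑ i ∈ Icc a b, t i * x i = (∑ i ∈ Icc a b, t i) * Z) :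
    (∑ i ∈ Icc a b, t i) * Z ^ p + ∑ i ∈ Icc a b, t i * |x i - Z| ^ p ≤
      ∑ i ∈ Icc a b, t i * x i ^ p :=
  ht.superquadratic (f' := fun u => p * u ^ (p - 1)) hx hxa
    (fun _ _ => Real.hasDerivAt_rpow_const (Or.inr (by linarith)))
    (fun u v hu hv => by
      have := Real.add_rpow_le_rpow_add hu hv (show 1 ≤ p - 1 by linarith)
      nlinarith)
    (by rw [Real.zero_rpow (by positivity)]) hZ0 hZ

theorem convexOn_abs_sub_rpow {p : ℝ} (hp : 1 ≤ p) (c : ℝ) :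
    ConvexOn ℝ Set.univ fun w => |w - c| ^ p := by
  refine ⟨convex_univ, fun u _ v _ α β hα hβ hαβ => ?_⟩
  have htri : |α • u + β • v - c| ≤ α • |u - c| + β • |v - c| := by
    calc |α • u + β • v - c| = |α * (u - c) + β * (v - c)| := by
          rw [smul_eq_mul, smul_eq_mul]; congr 1; linear_combination c * hαβ
      _ ≤ α • |u - c| + β • |v - c| := by
          simpa [abs_mul, abs_of_nonneg hα, abs_of_nonneg hβ]
            using abs_add_le (α * (u - c)) (β * (v - c))
  calc |α • u + β • v - c| ^ p ≤ (α • |u - c| + β • |v - c|) ^ p :=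
        Real.rpow_le_rpow (abs_nonneg _) htri (by linarith)
    _ ≤ α • |u - c| ^ p + β • |v - c| ^ p :=
        (convexOn_rpow hp).2 (Set.mem_Ici.2 (abs_nonneg _)) (Set.mem_Ici.2 (abs_nonneg _))
          hα hβ hαβ

theorem mul_abs_sub_rpow_add_mul_abs_sub_rpow {P p Z₁ Z₂ : ℝ} (hP0 : 0 < P) (hP1 : P < 1) :
    P * |Z₁ - (P * Z₁ + (1 - P) * Z₂)| ^ p + (1 - P) * |Z₂ - (P * Z₁ + (1 - P) * Z₂)| ^ p =
      (P + P ^ p * (1 - P) ^ (1 - p)) * |Z₁ - (P * Z₁ + (1 - P) * Z₂)| ^ p := by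
  have h₁ : |Z₁ - (P * Z₁ + (1 - P) * Z₂)| = (1 - P) * |Z₁ - Z₂| := by
    rw [show Z₁ - (P * Z₁ + (1 - P) * Z₂) = (1 - P) * (Z₁ - Z₂) by ring, abs_mul,
      abs_of_pos (sub_pos.2 hP1)]
  have h₂ : |Z₂ - (P * Z₁ + (1 - P) * Z₂)| = P * |Z₁ - Z₂| := by
    rw [show Z₂ - (P * Z₁ + (1 - P) * Z₂) = P * (Z₂ - Z₁) by ring, abs_mul, abs_of_pos hP0,
      abs_sub_comm]
  have hpow : (1 - P) ^ (1 - p) * (1 - P) ^ p = 1 - P := by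
    rw [← Real.rpow_add (sub_pos.2 hP1), sub_add_cancel, Real.rpow_one]
  rw [h₁, h₂, Real.mul_rpow (sub_pos.2 hP1).le (abs_nonneg _),
    Real.mul_rpow hP0.le (abs_nonneg _)]
  linear_combination (-(P ^ p * |Z₁ - Z₂| ^ p)) * hpow

theorem JensenSteffensenWeights.block_mean_deviation_le {t x : ℕ → ℝ} {a k b : ℕ}
    {p P xbar : ℝ} (hp : 1 < p) (ht₁ : JensenSteffensenWeights t a k)
    (ht₂ : JensenSteffensenWeights t (k + 1) b) (hx : MonotoneOn x (Set.Icc a b))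
    (hak : a ≤ k + 1) (hkb : k ≤ b) (hsum : ∑ i ∈ Icc a b, t i = 1)
    (hP : P = ∑ i ∈ Icc a k, t i) (hP0 : 0 < P) (hP1 : P < 1)
    (hxbar : xbar = ∑ i ∈ Icc a b, t i * x i) :
    (P + P ^ p * (1 - P) ^ (1 - p)) * |(∑ i ∈ Icc a k, t i * x i) / P - xbar| ^ p ≤
      ∑ i ∈ Icc a b, t i * |x i - xbar| ^ p := by
  have hQ : ∑ i ∈ Icc (k + 1) b, t i = 1 - P := by
    rw [← hsum, ← sum_Icc_consecutive t hak hkb, hP, add_sub_cancel_left]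
  set Z₁ := (∑ i ∈ Icc a k, t i * x i) / P
  set Z₂ := (∑ i ∈ Icc (k + 1) b, t i * x i) / (1 - P)
  have hZ₁ : ∑ i ∈ Icc a k, t i * x i = (∑ i ∈ Icc a k, t i) * Z₁ := by
    rw [← hP]; exact (mul_div_cancel₀ _ hP0.ne').symm
  have hZ₂ : ∑ i ∈ Icc (k + 1) b, t i * x i = (∑ i ∈ Icc (k + 1) b, t i) * Z₂ := by
    rw [hQ]; exact (mul_div_cancel₀ _ (sub_pos.2 hP1).ne').symm
  have hmean : xbar = P * Z₁ + (1 - P) * Z₂ := by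
    rw [hxbar, ← sum_Icc_consecutive _ hak hkb, hZ₁, hZ₂, hQ, ← hP]
  have hf := convexOn_abs_sub_rpow hp.le xbar
  have hd : ∀ z, DifferentiableAt ℝ (fun w => |w - xbar| ^ p) z := fun z =>
    (hasDerivAt_abs_rpow (z - xbar) hp).differentiableAt.comp z
      (differentiableAt_id.sub_const xbar)
  have h₁ := ht₁.jensen (hx.mono (Set.Icc_subset_Icc_right (by omega))) hf (hd Z₁) hZ₁
  have h₂ := ht₂.jensen (hx.mono (Set.Icc_subset_Icc_left (by omega))) hf (hd Z₂) hZ₂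
  rw [← hP] at h₁
  rw [hQ] at h₂
  calc (P + P ^ p * (1 - P) ^ (1 - p)) * |Z₁ - xbar| ^ p
      = P * |Z₁ - xbar| ^ p + (1 - P) * |Z₂ - xbar| ^ p := by
        rw [hmean, mul_abs_sub_rpow_add_mul_abs_sub_rpow hP0 hP1]
    _ ≤ ∑ i ∈ Icc a b, t i * |x i - xbar| ^ p := by
        rw [← sum_Icc_consecutive _ hak hkb]
        exact add_le_add h₁ h₂

theorem stmt_14_general (n : ℕ) (k : ℕ) (hkn : k ≤ n - 1)
    (r : ℝ) (hr : 1 ≤ r) (x t : ℕ → ℝ)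
    (hx0 : 0 ≤ x 1)
    (hxmono : ∀ i, 1 ≤ i → i ≤ n - 1 → x i ≤ x (i + 1))
    (htsum : ∑ i ∈ Finset.Icc 1 n, t i = 1)
    (hpartial : ∀ j, 1 ≤ j → j ≤ n →
      0 ≤ ∑ i ∈ Finset.Icc 1 j, t i ∧ ∑ i ∈ Finset.Icc 1 j, t i ≤ 1)
    (hmaxk : ∀ j, j ≤ k → ∑ i ∈ Finset.Icc 1 j, t i ≤ ∑ i ∈ Finset.Icc 1 k, t i)
    (hblock : ∀ l, k + 1 ≤ l → l ≤ n →
      0 ≤ ∑ i ∈ Finset.Icc (k + 1) l, t i ∧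
        ∑ i ∈ Finset.Icc (k + 1) l, t i ≤ ∑ i ∈ Finset.Icc (k + 1) n, t i)
    (P : ℝ) (hP : P = ∑ i ∈ Finset.Icc 1 k, t i) (hP0 : 0 < P) (hP1 : P < 1)
    (xbar : ℝ) (hxbar : xbar = ∑ i ∈ Finset.Icc 1 n, t i * x i)
    (y : ℕ → ℝ) (hy : ∀ i, y i = x i - xbar) :
    |(∑ i ∈ Finset.Icc 1 k, t i * x i) / P - xbar| ≤
      ((∑ i ∈ Finset.Icc 1 n, t i * |y i| ^ (2*r)) /
        (P + P ^ (2*r) * (1 - P) ^ (1 - 2*r))) ^ (1/(2*r)) ∧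
    ((∑ i ∈ Finset.Icc 1 n, t i * |y i| ^ (2*r)) /
        (P + P ^ (2*r) * (1 - P) ^ (1 - 2*r))) ^ (1/(2*r)) ≤
      (((∑ i ∈ Finset.Icc 1 n, t i * x i ^ (2*r)) - xbar ^ (2*r)) /
        (P + P ^ (2*r) * (1 - P) ^ (1 - 2*r))) ^ (1/(2*r)) := by
  have hx : MonotoneOn x (Set.Icc 1 n) := monotoneOn_of_le_add_one Set.ordConnected_Icc
    fun i _ hi hi' => hxmono i hi.1 (Nat.le_sub_one_of_lt hi'.2)
  have ht : JensenSteffensenWeights t 1 n := fun j hj =>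
    htsum ▸ hpartial j (mem_Icc.1 hj).1 (mem_Icc.1 hj).2
  have ht₁ : JensenSteffensenWeights t 1 k := fun j hj =>
    ⟨(hpartial j (mem_Icc.1 hj).1 ((mem_Icc.1 hj).2.trans (hkn.trans (Nat.sub_le n 1)))).1,
      hmaxk j (mem_Icc.1 hj).2⟩
  have ht₂ : JensenSteffensenWeights t (k + 1) n := fun j hj =>
    hblock j (mem_Icc.1 hj).1 (mem_Icc.1 hj).2
  have hxbar0 : 0 ≤ xbar := by
    have := ht.sum_mul_left_le_sum_mul hx
    rw [htsum, one_mul, ← hxbar] at this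
    exact hx0.trans this
  have hdev := ht₁.block_mean_deviation_le (p := 2 * r) (by linarith) ht₂ hx le_add_self
    (by omega) htsum hP hP0 hP1 hxbar
  have hsq := ht.rpow_superquadratic (p := 2 * r) (by linarith) hx hx0 hxbar0
    (by rw [htsum, one_mul, hxbar])
  simp only [← hy, htsum, one_mul] at hdev hsq
  set D := P + P ^ (2 * r) * (1 - P) ^ (1 - 2 * r)
  have hD : 0 < D :=
    add_pos hP0 (mul_pos (Real.rpow_pos_of_pos hP0 _) (Real.rpow_pos_of_pos (sub_pos.2 hP1) _))
  have hS : 0 ≤ (∑ i ∈ Icc 1 n, t i * |y i| ^ (2 * r)) / D :=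
    div_nonneg ((mul_nonneg hD.le (by positivity)).trans hdev) hD.le
  constructor
  · rw [one_div, Real.le_rpow_inv_iff_of_pos (abs_nonneg _) hS (by positivity), le_div_iff₀ hD,
      mul_comm]
    exact hdev
  · exact Real.rpow_le_rpow hS (div_le_div_of_nonneg_right (by linarith) hD.le) (by positivity)

/-- Corollary 2 a. of the paper: Jensen–Steffensen type coefficients, block
average bound together with the superquadratic bound for `x ↦ x^(2r)` on
`[0, b)`, `b ≤ ∞`. -/
theorem stmt_14 (n : ℕ) (hn : 2 ≤ n) (k : ℕ) (hk1 : 1 ≤ k) (hkn : k ≤ n - 1)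
    (r : ℝ) (hr : 1 ≤ r) (b : EReal) (x t : ℕ → ℝ)
    (hx0 : 0 ≤ x 1)
    (hxmono : ∀ i, 1 ≤ i → i ≤ n - 1 → x i ≤ x (i + 1))
    (hxb : ∀ i ∈ Finset.Icc 1 n, (x i : EReal) < b)
    (htsum : ∑ i ∈ Finset.Icc 1 n, t i = 1)
    (hpartial : ∀ j, 1 ≤ j → j ≤ n →
      0 ≤ ∑ i ∈ Finset.Icc 1 j, t i ∧ ∑ i ∈ Finset.Icc 1 j, t i ≤ 1)
    (hmaxk : ∀ j, j ≤ k → ∑ i ∈ Finset.Icc 1 j, t i ≤ ∑ i ∈ Finset.Icc 1 k, t i)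
    (htk1 : 0 < t (k + 1))
    (hblock : ∀ l, k + 1 ≤ l → l ≤ n →
      0 ≤ ∑ i ∈ Finset.Icc (k + 1) l, t i ∧
        ∑ i ∈ Finset.Icc (k + 1) l, t i ≤ ∑ i ∈ Finset.Icc (k + 1) n, t i)
    (P : ℝ) (hP : P = ∑ i ∈ Finset.Icc 1 k, t i) (hP0 : 0 < P) (hP1 : P < 1)
    (xbar : ℝ) (hxbar : xbar = ∑ i ∈ Finset.Icc 1 n, t i * x i)
    (y : ℕ → ℝ) (hy : ∀ i, y i = x i - xbar) :
    |(∑ i ∈ Finset.Icc 1 k, t i * x i) / P - xbar| ≤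
      ((∑ i ∈ Finset.Icc 1 n, t i * |y i| ^ (2*r)) /
        (P + P ^ (2*r) * (1 - P) ^ (1 - 2*r))) ^ (1/(2*r)) ∧
    ((∑ i ∈ Finset.Icc 1 n, t i * |y i| ^ (2*r)) /
        (P + P ^ (2*r) * (1 - P) ^ (1 - 2*r))) ^ (1/(2*r)) ≤
      (((∑ i ∈ Finset.Icc 1 n, t i * x i ^ (2*r)) - xbar ^ (2*r)) /
        (P + P ^ (2*r) * (1 - P) ^ (1 - 2*r))) ^ (1/(2*r)) :=
  stmt_14_general n k hkn r hr x t hx0 hxmono htsum hpartial hmaxk hblock P hP hP0 hP1 xbar hxbar y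
    hy
end
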